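/- arXiv:2310.17087 — 2 statements merged into one kernel-verified Lean document; each statement's English description precedes it below -/
import Mathlib

section
/- For every real parameter 0 < a ≤ 1: the function F_a(s) attains its global minimum exactly at s = 1 (F_a is strictly decreasing on (−∞,1] and strictly increasing on [1,∞)), so the global minimizers of f_a(x,y) = F_a(xy) are exactly {(x,y) : xy = 1}; moreover F_a'(1) = 0 and F_a''(1) = 1, so at any point (x,y) with xy = 1 the Hessian of f_a equals the outer product (y,x)(y,x)ᵀ, whose largest eigenvalue is x² + y². -/
/-- `F_a(s) = C_a (log(e^{s-1}+1) + log(e^{1-s}+1))^a` with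
`C_a = 1/(a 2^{a-2} (log 2)^{a-1})`, for `0 < a ≤ 1`. -/
noncomputable def Fa (a : ℝ) (s : ℝ) : ℝ :=
  (1 / (a * (2 : ℝ) ^ (a - 2) * Real.log 2 ^ (a - 1))) *
    (Real.log (Real.exp (s - 1) + 1) + Real.log (Real.exp (1 - s) + 1)) ^ a

/-- `f_a(x,y) = F_a(xy)`. -/
noncomputable def fa (a : ℝ) (x y : ℝ) : ℝ := Fa a (x * y)

/-- second partial derivative `∂²f/∂x²`. -/
noncomputable def fxx (a : ℝ) (x y : ℝ) : ℝ := deriv (fun t => deriv (fun u => fa a u y) t) x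
/-- second partial derivative `∂²f/∂y∂x`. -/
noncomputable def fxy (a : ℝ) (x y : ℝ) : ℝ := deriv (fun t => deriv (fun u => fa a u t) x) y
/-- second partial derivative `∂²f/∂x∂y`. -/
noncomputable def fyx (a : ℝ) (x y : ℝ) : ℝ := deriv (fun t => deriv (fun u => fa a t u) y) x
/-- second partial derivative `∂²f/∂y²`. -/
noncomputable def fyy (a : ℝ) (x y : ℝ) : ℝ := deriv (fun t => deriv (fun u => fa a x u) t) y

/-!
Since `(eᵗ + 1)(e⁻ᵗ + 1) = 2 + 2 cosh t`, we have `F_a(s) = C_a g(s - 1)^a` with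
`g t = log (2 + 2 cosh t)`, an even function increasing in `|t|`; hence `F_a(s)` is a strictly
increasing function of `|s - 1|`. At `0`: `g = 2 log 2`, `g' = 0`, `g'' = 1/2`, so
`F_a'(1) = 0` and `F_a''(1) = C_a a (2 log 2)^(a-1) / 2 = 1`. The Hessian of `(x, y) ↦ F(xy)` is
`F''(xy) (y, x)(y, x)ᵀ + F'(xy) [[0, 1], [1, 0]]`, and on `xy = 1` the second term vanishes.
-/

open Real

noncomputable def logTwoAddTwoCosh (t : ℝ) : ℝ := log (2 + 2 * cosh t)

lemma log_exp_add_one_add_log_exp_neg_add_one (t : ℝ) :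
    log (exp t + 1) + log (exp (-t) + 1) = logTwoAddTwoCosh t := by
  rw [← log_mul (by positivity) (by positivity), logTwoAddTwoCosh, cosh_eq]
  congr 1
  have h := exp_add t (-t)
  rw [add_neg_cancel, exp_zero] at h
  linear_combination -h

lemma logTwoAddTwoCosh_pos (t : ℝ) : 0 < logTwoAddTwoCosh t :=
  log_pos (by linarith [one_le_cosh t])

lemma logTwoAddTwoCosh_lt_iff {s t : ℝ} :
    logTwoAddTwoCosh s < logTwoAddTwoCosh t ↔ |s| < |t| := by
  rw [logTwoAddTwoCosh, logTwoAddTwoCosh,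
    log_lt_log_iff (by linarith [one_le_cosh s]) (by linarith [one_le_cosh t]), ← cosh_lt_cosh]
  constructor <;> intro h <;> linarith

lemma logTwoAddTwoCosh_zero : logTwoAddTwoCosh 0 = 2 * log 2 := by
  rw [logTwoAddTwoCosh, cosh_zero, show (2 : ℝ) + 2 * 1 = 2 ^ 2 by norm_num, log_pow]
  norm_num

lemma hasDerivAt_logTwoAddTwoCosh (t : ℝ) :
    HasDerivAt logTwoAddTwoCosh (sinh t / (1 + cosh t)) t := by
  have hpos : 0 < 1 + cosh t := by linarith [one_le_cosh t]
  have h : HasDerivAt (fun t => log (2 + 2 * cosh t)) (2 * sinh t / (2 + 2 * cosh t)) t :=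
    (((hasDerivAt_cosh t).const_mul 2).const_add 2).log (by linarith)
  refine h.congr_deriv ?_
  field_simp

lemma hasDerivAt_sinh_div_one_add_cosh_zero :
    HasDerivAt (fun t => sinh t / (1 + cosh t)) (1 / 2) 0 := by
  have h : HasDerivAt (fun t => sinh t / (1 + cosh t))
      ((cosh 0 * (1 + cosh 0) - sinh 0 * sinh 0) / (1 + cosh 0) ^ 2) 0 :=
    (hasDerivAt_sinh 0).div ((hasDerivAt_cosh 0).const_add 1) (by norm_num)
  convert h using 1
  norm_num

lemma hasDerivAt_deriv_rpow_of_deriv_eq_zero {g g' : ℝ → ℝ} {t₀ g'' : ℝ} (a : ℝ)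
    (hg : ∀ t, HasDerivAt g (g' t) t) (hg0 : ∀ t, g t ≠ 0) (hg' : HasDerivAt g' g'' t₀)
    (hcrit : g' t₀ = 0) :
    HasDerivAt (deriv fun t => g t ^ a) (g'' * a * g t₀ ^ (a - 1)) t₀ := by
  have hderiv : (deriv fun t => g t ^ a) = fun t => g' t * a * g t ^ (a - 1) :=
    funext fun t => ((hg t).rpow_const (Or.inl (hg0 t))).deriv
  have h : HasDerivAt (fun t => g' t * a * g t ^ (a - 1))
      (g'' * a * g t₀ ^ (a - 1) + g' t₀ * a * (g' t₀ * (a - 1) * g t₀ ^ (a - 1 - 1))) t₀ :=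
    (hg'.mul_const a).mul ((hg t₀).rpow_const (Or.inl (hg0 t₀)))
  rw [hderiv]
  simpa [hcrit] using h

noncomputable def Ca (a : ℝ) : ℝ := 1 / (a * 2 ^ (a - 2) * log 2 ^ (a - 1))

lemma Ca_pos {a : ℝ} (ha : 0 < a) : 0 < Ca a := by
  have : 0 < log 2 := log_pos one_lt_two
  unfold Ca
  positivity

lemma Ca_mul_eq_one {a : ℝ} (ha : 0 < a) : Ca a * (1 / 2 * a * (2 * log 2) ^ (a - 1)) = 1 := by
  have hlog : 0 < log 2 := log_pos one_lt_two
  have htwo : (2 : ℝ) ^ (a - 1) = 2 * 2 ^ (a - 2) := by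
    rw [show a - 1 = 1 + (a - 2) by ring, rpow_add two_pos, rpow_one]
  have h2 : (2 : ℝ) ^ (a - 2) ≠ 0 := (rpow_pos_of_pos two_pos _).ne'
  have hl : log 2 ^ (a - 1) ≠ 0 := (rpow_pos_of_pos hlog _).ne'
  rw [Ca, mul_rpow zero_le_two hlog.le, htwo]
  field_simp

lemma Fa_eq (a s : ℝ) : Fa a s = Ca a * logTwoAddTwoCosh (s - 1) ^ a := by
  rw [Fa, Ca, ← log_exp_add_one_add_log_exp_neg_add_one, neg_sub]

lemma Fa_lt_Fa_iff {a : ℝ} (ha : 0 < a) {s t : ℝ} : Fa a s < Fa a t ↔ |s - 1| < |t - 1| := by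
  rw [Fa_eq, Fa_eq, mul_lt_mul_iff_right₀ (Ca_pos ha),
    rpow_lt_rpow_iff (logTwoAddTwoCosh_pos _).le (logTwoAddTwoCosh_pos _).le ha,
    logTwoAddTwoCosh_lt_iff]

lemma Fa_strictAntiOn {a : ℝ} (ha : 0 < a) : StrictAntiOn (Fa a) (Set.Iic 1) :=
  fun s hs t ht hst => (Fa_lt_Fa_iff ha).2 <| by
    rw [abs_of_nonpos (sub_nonpos.2 ht), abs_of_nonpos (sub_nonpos.2 hs)]
    linarith

lemma Fa_strictMonoOn {a : ℝ} (ha : 0 < a) : StrictMonoOn (Fa a) (Set.Ici 1) :=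
  fun s hs t ht hst => (Fa_lt_Fa_iff ha).2 <| by
    rw [abs_of_nonneg (sub_nonneg.2 hs), abs_of_nonneg (sub_nonneg.2 ht)]
    linarith

lemma Fa_one_le {a : ℝ} (ha : 0 < a) (s : ℝ) : Fa a 1 ≤ Fa a s :=
  not_lt.1 <| (Fa_lt_Fa_iff ha).not.2 <| by simp

lemma Fa_le_Fa_one_iff {a : ℝ} (ha : 0 < a) {s : ℝ} : Fa a s ≤ Fa a 1 ↔ s = 1 := by
  rw [← not_lt, Fa_lt_Fa_iff ha, sub_self, abs_zero, abs_pos, not_not, sub_eq_zero]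

lemma setOf_forall_fa_le_eq_setOf_mul_eq_one {a : ℝ} (ha : 0 < a) :
    {p : ℝ × ℝ | ∀ q : ℝ × ℝ, fa a p.1 p.2 ≤ fa a q.1 q.2} = {p : ℝ × ℝ | p.1 * p.2 = 1} := by
  ext ⟨x, y⟩
  refine ⟨fun h => (Fa_le_Fa_one_iff ha).1 (by simpa [fa] using h (1, 1)), fun hxy q => ?_⟩
  simp only [fa]
  rw [hxy]
  exact Fa_one_le ha _

lemma deriv_Fa (a : ℝ) :
    deriv (Fa a) = fun s => Ca a * deriv (fun t => logTwoAddTwoCosh t ^ a) (s - 1) := by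
  rw [show Fa a = fun s => Ca a * logTwoAddTwoCosh (s - 1) ^ a from funext (Fa_eq a),
    deriv_const_mul_field']
  simp only [deriv_comp_sub_const (f := fun t => logTwoAddTwoCosh t ^ a)]

lemma deriv_Fa_one (a : ℝ) : deriv (Fa a) 1 = 0 := by
  simp only [deriv_Fa, sub_self]
  rw [((hasDerivAt_logTwoAddTwoCosh 0).rpow_const (Or.inl (logTwoAddTwoCosh_pos 0).ne')).deriv]
  simp

lemma hasDerivAt_deriv_Fa_one {a : ℝ} (ha : 0 < a) : HasDerivAt (deriv (Fa a)) 1 1 := by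
  have h := hasDerivAt_deriv_rpow_of_deriv_eq_zero a hasDerivAt_logTwoAddTwoCosh
    (fun t => (logTwoAddTwoCosh_pos t).ne') hasDerivAt_sinh_div_one_add_cosh_zero (by simp)
  rw [logTwoAddTwoCosh_zero, ← sub_self 1] at h
  rw [deriv_Fa]
  simpa only [Ca_mul_eq_one ha] using (h.comp_sub_const 1 1).const_mul (Ca a)

lemma deriv_deriv_comp_mul_const (F : ℝ → ℝ) (x y : ℝ) :
    deriv (fun t => deriv (fun u => F (u * y)) t) x = y ^ 2 * deriv (deriv F) (x * y) := by
  have h (G : ℝ → ℝ) (t : ℝ) : deriv (fun u => G (u * y)) t = y * deriv G (t * y) := by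
    simpa [mul_comm] using deriv_comp_mul_left y G t
  rw [funext (h F), deriv_const_mul_field']
  beta_reduce
  rw [h]
  ring

lemma deriv_deriv_comp_mul {F : ℝ → ℝ} {x y : ℝ} (hF : DifferentiableAt ℝ (deriv F) (x * y)) :
    deriv (fun t => deriv (fun u => F (u * t)) x) y =
      deriv F (x * y) + x * y * deriv (deriv F) (x * y) := by
  have h (t : ℝ) : deriv (fun u => F (u * t)) x = t * deriv F (x * t) := by
    simpa [mul_comm] using deriv_comp_mul_left t F x
  have hd : HasDerivAt (fun t => t * deriv F (x * t))
      (1 * deriv F (x * y) + y * (deriv (deriv F) (x * y) * (x * 1))) y :=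
    (hasDerivAt_id' y).mul (hF.hasDerivAt.comp y ((hasDerivAt_id' y).const_mul x))
  rw [funext h, hd.deriv]
  ring

lemma fxx_eq (a x y : ℝ) : fxx a x y = y ^ 2 * deriv (deriv (Fa a)) (x * y) :=
  deriv_deriv_comp_mul_const (Fa a) x y

lemma fxy_eq {a x y : ℝ} (h : DifferentiableAt ℝ (deriv (Fa a)) (x * y)) :
    fxy a x y = deriv (Fa a) (x * y) + x * y * deriv (deriv (Fa a)) (x * y) :=
  deriv_deriv_comp_mul h

lemma fyy_eq_fxx (a x y : ℝ) : fyy a x y = fxx a y x := by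
  simp only [fyy, fxx, fa, mul_comm x]

lemma fyx_eq_fxy (a x y : ℝ) : fyx a x y = fxy a y x := by
  simp only [fyx, fxy, fa, mul_comm]

lemma det_sub_smul_one_of_mul_eq_one {x y : ℝ} (hxy : x * y = 1) (μ : ℝ) :
    Matrix.det (!![y ^ 2, 1; 1, x ^ 2] - μ • (1 : Matrix (Fin 2) (Fin 2) ℝ)) =
      μ * (μ - (x ^ 2 + y ^ 2)) := by
  simp only [Matrix.det_fin_two, Fin.isValue, Matrix.sub_apply, Matrix.of_apply, Matrix.cons_val',
    Matrix.cons_val_zero, Matrix.cons_val_fin_one, Matrix.smul_apply, Matrix.one_apply_eq,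
    smul_eq_mul, mul_one, Matrix.cons_val_one, Matrix.one_apply_ne, ne_eq, zero_ne_one,
    one_ne_zero, not_false_eq_true, mul_zero, sub_zero]
  linear_combination (x * y + 1) * hxy

theorem stmt_2_general (a : ℝ) (ha0 : 0 < a) :
    StrictAntiOn (Fa a) (Set.Iic 1) ∧ StrictMonoOn (Fa a) (Set.Ici 1) ∧
    {p : ℝ × ℝ | ∀ q : ℝ × ℝ, fa a p.1 p.2 ≤ fa a q.1 q.2} = {p : ℝ × ℝ | p.1 * p.2 = 1} ∧
    deriv (Fa a) 1 = 0 ∧ deriv (deriv (Fa a)) 1 = 1 ∧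
    (∀ x y : ℝ, x * y = 1 →
      fxx a x y = y ^ 2 ∧ fxy a x y = 1 ∧ fyx a x y = 1 ∧ fyy a x y = x ^ 2 ∧
      Matrix.det (!![y ^ 2, 1; 1, x ^ 2] -
        (x ^ 2 + y ^ 2) • (1 : Matrix (Fin 2) (Fin 2) ℝ)) = 0 ∧
      (∀ μ : ℝ,
        Matrix.det (!![y ^ 2, 1; 1, x ^ 2] - μ • (1 : Matrix (Fin 2) (Fin 2) ℝ)) = 0 →
          μ ≤ x ^ 2 + y ^ 2)) := by
  have hF'' := hasDerivAt_deriv_Fa_one ha0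
  refine ⟨Fa_strictAntiOn ha0, Fa_strictMonoOn ha0, setOf_forall_fa_le_eq_setOf_mul_eq_one ha0,
    deriv_Fa_one a, hF''.deriv, fun x y hxy => ?_⟩
  have hyx : y * x = 1 := by rwa [mul_comm]
  have hfxy : ∀ {u v : ℝ}, u * v = 1 → fxy a u v = 1 := fun huv => by
    rw [fxy_eq (huv ▸ hF''.differentiableAt), huv, deriv_Fa_one, hF''.deriv]
    ring
  refine ⟨?_, hfxy hxy, by rw [fyx_eq_fxy, hfxy hyx], ?_, ?_, fun μ hμ => ?_⟩
  · rw [fxx_eq, hxy, hF''.deriv, mul_one]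
  · rw [fyy_eq_fxx, fxx_eq, hyx, hF''.deriv, mul_one]
  · rw [det_sub_smul_one_of_mul_eq_one hxy, sub_self, mul_zero]
  · rw [det_sub_smul_one_of_mul_eq_one hxy] at hμ
    rcases mul_eq_zero.1 hμ with h | h
    · rw [h]
      positivity
    · linarith

theorem stmt_2 (a : ℝ) (ha0 : 0 < a) (ha1 : a ≤ 1) :
    StrictAntiOn (Fa a) (Set.Iic 1) ∧ StrictMonoOn (Fa a) (Set.Ici 1) ∧
    {p : ℝ × ℝ | ∀ q : ℝ × ℝ, fa a p.1 p.2 ≤ fa a q.1 q.2} = {p : ℝ × ℝ | p.1 * p.2 = 1} ∧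
    deriv (Fa a) 1 = 0 ∧ deriv (deriv (Fa a)) 1 = 1 ∧
    (∀ x y : ℝ, x * y = 1 →
      fxx a x y = y ^ 2 ∧ fxy a x y = 1 ∧ fyx a x y = 1 ∧ fyy a x y = x ^ 2 ∧
      Matrix.det (!![y ^ 2, 1; 1, x ^ 2] -
        (x ^ 2 + y ^ 2) • (1 : Matrix (Fin 2) (Fin 2) ℝ)) = 0 ∧
      (∀ μ : ℝ,
        Matrix.det (!![y ^ 2, 1; 1, x ^ 2] - μ • (1 : Matrix (Fin 2) (Fin 2) ℝ)) = 0 →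
          μ ≤ x ^ 2 + y ^ 2)) :=
  stmt_2_general a ha0
end

section
/- (M₃ > 3.) Let b ≥ 3 be an odd integer and let (x₀, y₀) satisfy x₀y₀ > 2^{1/(b−1)} and x₀² + y₀² ≥ 4. Set h₃ = 3/((x₀² + y₀² + 4)(x₀y₀)^{2b−2}) and ℓ₀ = F_b'(x₀y₀) = (x₀y₀)^{b−1}((x₀y₀)^b − 1)/b. Then (1 + h₃²ℓ₀²)x₀y₀ − h₃ℓ₀(x₀² + y₀²) > 0. -/
/-- `M₃ > 3` for the bad regularity functions: with
`h₃ = 3/((x₀²+y₀²+4)(x₀y₀)^{2b-2})` and `ℓ₀ = F_b'(x₀y₀) = (x₀y₀)^{b-1}((x₀y₀)^b - 1)/b`,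
the quantity `(1 + h₃²ℓ₀²)x₀y₀ - h₃ℓ₀(x₀²+y₀²)` is positive. -/
theorem stmt_14 (b : ℕ) (hodd : Odd b) (hb : 3 ≤ b) (x₀ y₀ : ℝ)
    (h1 : x₀ * y₀ > (2 : ℝ) ^ ((1 : ℝ) / ((b : ℝ) - 1)))
    (h2 : x₀ ^ 2 + y₀ ^ 2 ≥ 4)
    (h₃ ℓ₀ : ℝ)
    (hh₃ : h₃ = 3 / ((x₀ ^ 2 + y₀ ^ 2 + 4) * (x₀ * y₀) ^ (2 * b - 2)))
    (hℓ₀ : ℓ₀ = (x₀ * y₀) ^ (b - 1) * ((x₀ * y₀) ^ b - 1) / (b : ℝ)) :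
    (1 + h₃ ^ 2 * ℓ₀ ^ 2) * (x₀ * y₀) - h₃ * ℓ₀ * (x₀ ^ 2 + y₀ ^ 2) > 0 := by
  have hbR : (3:ℝ) ≤ (b:ℝ) := by exact_mod_cast hb
  have hs1 : (1:ℝ) < x₀ * y₀ := by
    refine lt_trans ?_ h1
    rw [Real.one_lt_rpow_iff_of_pos (by norm_num)]
    left
    exact ⟨by norm_num, div_pos one_pos (by linarith)⟩
  have hs0 : (0:ℝ) < x₀ * y₀ := by linarith
  have h2b : 2 * b - 2 = (b - 1) + (b - 1) := by omega
  have hq : (x₀ * y₀) ^ b = (x₀ * y₀) ^ (b - 1) * (x₀ * y₀) := by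
    rw [← pow_succ]; congr 1; omega
  set s := x₀ * y₀ with hsdef
  set A := x₀ ^ 2 + y₀ ^ 2 with hAdef
  set p := s ^ (b - 1) with hpdef
  have hp0 : (0:ℝ) < p := by positivity
  have hp1 : (1:ℝ) ≤ p := by
    rw [hpdef]; exact one_le_pow₀ hs1.le
  have hb0 : (0:ℝ) < (b:ℝ) := by linarith
  have hA4 : (4:ℝ) ≤ A := h2
  have hk : h₃ * ℓ₀ = 3 * (p * s - 1) / ((A + 4) * p * (b:ℝ)) := by
    rw [hh₃, hℓ₀, hq, h2b, pow_add]
    field_simp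
    ring
  have hps : (1:ℝ) < p * s := by nlinarith
  have hkA : (h₃ * ℓ₀) * A < s := by
    rw [hk, div_mul_eq_mul_div, div_lt_iff₀ (by positivity)]
    have h3A : 3 * A ≤ (b:ℝ) * (A + 4) := by nlinarith
    nlinarith [mul_nonneg (by nlinarith : (0:ℝ) ≤ (b:ℝ) * (A + 4) - 3 * A)
      (mul_pos hp0 hs0).le]
  have hk0 : 0 ≤ h₃ * ℓ₀ := by
    rw [hk]
    exact div_nonneg (by nlinarith) (by positivity)
  nlinarith [mul_nonneg (mul_nonneg hk0 hk0) hs0.le]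
end
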